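/- The LTS2 scheme conserves total mass exactly: under the flux-form and locality assumptions, for every coarse step Δt, every M ≥ 1, and every initial state x⁰, one LTS2 step satisfies m(x^new) = m(x⁰), where m(x) = Σ_{i∈Cell} A_i·x_i. -/

import Mathlib

/-!
Every cell value produced by one LTS2 step has the form
`x⁰ᵢ + (Δt / 2M) · Σₖ (G(vᵏ)ᵢ + G(wᵏ)ᵢ)`: on fine cells by induction on the substeps, on
interface cells by construction, and on coarse cells because locality freezes `G(vᵏ)ᵢ = G(x⁰)ᵢ`
and `G(wᵏ)ᵢ = G(x¹)ᵢ`, so the sum collapses to Heun's update. In flux form every right-hand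
side has zero mass (each edge flux leaves one cell and enters another), hence so does the
update.
-/

open scoped Classical

/-- The substepping recursion of one LTS2 step. Starting from the state `x0`, the
first-stage vector `x1`, coarse step `Δt` and substep count `M`, it returns the triple
`(a^k, P^k, Q^k)`: the fine solution after `k` substeps (meaningful on `F`), and the two
accumulated interface correction terms (meaningful on `I₁ ∪ I₂`). -/
noncomputable def lts2Sub {ι : Type*} (F I₁ : Set ι)
    (G : (ι → ℝ) → ι → ℝ) (Δt : ℝ) (M : ℕ) (x0 x1 : ι → ℝ) :
    ℕ → ((ι → ℝ) × (ι → ℝ) × (ι → ℝ))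
  | 0 => (x0, fun _ => 0, fun _ => 0)
  | k + 1 =>
    let s := lts2Sub F I₁ G Δt M x0 x1 k
    let a := s.1
    let P := s.2.1
    let Q := s.2.2
    -- v^k: a^k on F, the α-interpolant on I₁, x⁰ on I₂ ∪ C
    let v : ι → ℝ := fun i =>
      if i ∈ F then a i
      else if i ∈ I₁ then (1 - (k : ℝ) / M) * x0 i + ((k : ℝ) / M) * x1 i
      else x0 i
    -- b^k = v^k + (Δt/M)·G(v^k) (used on F)
    let b : ι → ℝ := fun i => v i + (Δt / M) * G v i
    -- w^k: b^k on F, the β-interpolant on I₁, x¹ on I₂ ∪ C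
    let w : ι → ℝ := fun i =>
      if i ∈ F then b i
      else if i ∈ I₁ then
        (1 - ((k : ℝ) + 1) / M) * x0 i + (((k : ℝ) + 1) / M) * x1 i
      else x1 i
    (fun i => (1 / 2) * a i + (1 / 2) * b i + (1 / 2) * (Δt / M) * G w i,
     fun i => P i + G v i,
     fun i => Q i + G w i)

/-- One step of the second-order local time-stepping scheme LTS2, with fine region `F`,
interface regions `I₁`, `I₂`, coarse region `C`, right-hand side `G`, coarse step `Δt`
and `M` fine substeps per coarse step. -/
noncomputable def lts2Step {ι : Type*} (F I₁ I₂ C : Set ι)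
    (G : (ι → ℝ) → ι → ℝ) (Δt : ℝ) (M : ℕ) (x0 : ι → ℝ) : ι → ℝ :=
  -- x¹ = x⁰ + Δt·G(x⁰) on I₁ ∪ I₂ ∪ C, and x¹ = x⁰ on F
  let x1 : ι → ℝ := fun i => if i ∈ F then x0 i else x0 i + Δt * G x0 i
  -- x² = (1/2)x⁰ + (1/2)x¹ + (1/2)Δt·G(x¹) (used on C)
  let x2 : ι → ℝ := fun i =>
    (1 / 2) * x0 i + (1 / 2) * x1 i + (1 / 2) * Δt * G x1 i
  let s := lts2Sub F I₁ G Δt M x0 x1 M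
  fun i =>
    if i ∈ F then s.1 i
    else if i ∈ C then x2 i
    else x0 i + (Δt / M) * ((1 / 2) * s.2.1 i + (1 / 2) * s.2.2 i)

open Finset

section FluxForm

variable {ι Ed : Type*} [Fintype Ed] {Cell : Finset ι} {c₁ c₂ : Ed → ι} {A : ι → ℝ}

theorem sum_mul_eq_zero_of_flux_form (hc₁ : ∀ e, c₁ e ∈ Cell) (hc₂ : ∀ e, c₂ e ∈ Cell)
    (hA : ∀ i ∈ Cell, A i ≠ 0) (φ : Ed → ℝ) {g : ι → ℝ}
    (hg : ∀ i ∈ Cell, g i = -(1 / A i) *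
      ((∑ e ∈ univ.filter (fun e => c₁ e = i), φ e) -
        (∑ e ∈ univ.filter (fun e => c₂ e = i), φ e))) :
    ∑ i ∈ Cell, A i * g i = 0 := by
  calc ∑ i ∈ Cell, A i * g i
      = ∑ i ∈ Cell, ((∑ e ∈ univ.filter (fun e => c₂ e = i), φ e) -
          (∑ e ∈ univ.filter (fun e => c₁ e = i), φ e)) := by
        refine sum_congr rfl fun i hi => ?_
        rw [hg i hi]
        field_simp [hA i hi]
        ring
    _ = ∑ e, φ e - ∑ e, φ e := by
        rw [sum_sub_distrib, sum_fiberwise_of_maps_to (fun e _ => hc₂ e),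
          sum_fiberwise_of_maps_to (fun e _ => hc₁ e)]
    _ = 0 := sub_self _

theorem apply_eq_of_flux_form_of_eqOn {G : (ι → ℝ) → ι → ℝ} {l : Ed → ℝ}
    {Fl : Ed → (ι → ℝ) → ℝ} {C S : Set ι}
    (hflux : ∀ i ∈ Cell, ∀ x : ι → ℝ, G x i =
      -(1 / A i) * ((∑ e ∈ univ.filter (fun e => c₁ e = i), l e * Fl e x) -
                    (∑ e ∈ univ.filter (fun e => c₂ e = i), l e * Fl e x)))
    (hlocal : ∀ e : Ed, (c₁ e ∈ C ∨ c₂ e ∈ C) →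
      ∀ x y : ι → ℝ, (∀ j ∈ S, x j = y j) → Fl e x = Fl e y)
    {i : ι} (hi : i ∈ Cell) (hiC : i ∈ C) {x y : ι → ℝ} (hxy : Set.EqOn x y S) :
    G x i = G y i := by
  have hsum (c : Ed → ι) (hc : ∀ e, c e = i → c₁ e ∈ C ∨ c₂ e ∈ C) :
      ∑ e ∈ univ.filter (fun e => c e = i), l e * Fl e x =
        ∑ e ∈ univ.filter (fun e => c e = i), l e * Fl e y :=
    sum_congr rfl fun e he => by
      rw [hlocal e (hc e (mem_filter.mp he).2) x y hxy]
  rw [hflux i hi, hflux i hi, hsum c₁ fun e he => Or.inl (he ▸ hiC),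
    hsum c₂ fun e he => Or.inr (he ▸ hiC)]

theorem sum_mul_eq_of_eq_add_sum {κ : Type*} {x y : ι → ℝ} (c : ℝ) (s : Finset κ)
    {g : κ → ι → ℝ} (hg : ∀ k ∈ s, ∑ i ∈ Cell, A i * g k i = 0)
    (hy : ∀ i ∈ Cell, y i = x i + c * ∑ k ∈ s, g k i) :
    ∑ i ∈ Cell, A i * y i = ∑ i ∈ Cell, A i * x i := by
  have hincr : ∑ i ∈ Cell, A i * (c * ∑ k ∈ s, g k i) = 0 := by
    simp_rw [mul_sum]
    rw [sum_comm]
    exact sum_eq_zero fun k hk => by simp_rw [mul_left_comm (A _) c, ← mul_sum, hg k hk, mul_zero]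
  rw [sum_congr rfl fun i hi => by rw [hy i hi, mul_add], sum_add_distrib, hincr, add_zero]

end FluxForm

section Substeps

variable {ι : Type*} (F I₁ : Set ι) (G : (ι → ℝ) → ι → ℝ) (Δt : ℝ) (M : ℕ) (x0 x1 : ι → ℝ)

noncomputable def lts2SubV (k : ℕ) : ι → ℝ := fun i =>
  if i ∈ F then (lts2Sub F I₁ G Δt M x0 x1 k).1 i
  else if i ∈ I₁ then (1 - (k : ℝ) / M) * x0 i + ((k : ℝ) / M) * x1 i
  else x0 i

noncomputable def lts2SubW (k : ℕ) : ι → ℝ := fun i =>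
  if i ∈ F then lts2SubV F I₁ G Δt M x0 x1 k i + (Δt / M) * G (lts2SubV F I₁ G Δt M x0 x1 k) i
  else if i ∈ I₁ then (1 - ((k : ℝ) + 1) / M) * x0 i + (((k : ℝ) + 1) / M) * x1 i
  else x1 i

theorem lts2Sub_succ (k : ℕ) :
    lts2Sub F I₁ G Δt M x0 x1 (k + 1) =
      (fun i => (1 / 2) * (lts2Sub F I₁ G Δt M x0 x1 k).1 i
          + (1 / 2) * (lts2SubV F I₁ G Δt M x0 x1 k i
            + (Δt / M) * G (lts2SubV F I₁ G Δt M x0 x1 k) i)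
          + (1 / 2) * (Δt / M) * G (lts2SubW F I₁ G Δt M x0 x1 k) i,
        fun i => (lts2Sub F I₁ G Δt M x0 x1 k).2.1 i + G (lts2SubV F I₁ G Δt M x0 x1 k) i,
        fun i => (lts2Sub F I₁ G Δt M x0 x1 k).2.2 i + G (lts2SubW F I₁ G Δt M x0 x1 k) i) :=
  rfl

theorem lts2Sub_snd_fst (k : ℕ) (i : ι) :
    (lts2Sub F I₁ G Δt M x0 x1 k).2.1 i = ∑ j ∈ range k, G (lts2SubV F I₁ G Δt M x0 x1 j) i := by
  induction k with
  | zero => rfl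
  | succ k ih => rw [lts2Sub_succ, sum_range_succ, ← ih]

theorem lts2Sub_snd_snd (k : ℕ) (i : ι) :
    (lts2Sub F I₁ G Δt M x0 x1 k).2.2 i = ∑ j ∈ range k, G (lts2SubW F I₁ G Δt M x0 x1 j) i := by
  induction k with
  | zero => rfl
  | succ k ih => rw [lts2Sub_succ, sum_range_succ, ← ih]

theorem lts2Sub_fst_of_mem {i : ι} (hi : i ∈ F) (k : ℕ) :
    (lts2Sub F I₁ G Δt M x0 x1 k).1 i = x0 i + (Δt / (2 * M)) *
      ∑ j ∈ range k, (G (lts2SubV F I₁ G Δt M x0 x1 j) i + G (lts2SubW F I₁ G Δt M x0 x1 j) i) := by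
  induction k with
  | zero => simp [lts2Sub]
  | succ k ih =>
    have hv : lts2SubV F I₁ G Δt M x0 x1 k i = (lts2Sub F I₁ G Δt M x0 x1 k).1 i := if_pos hi
    rw [lts2Sub_succ]
    dsimp only
    rw [hv, ih, sum_range_succ]
    ring

variable {F I₁}

theorem lts2SubV_eqOn {S : Set ι} (hF : Disjoint F S) (hI₁ : Disjoint I₁ S) (k : ℕ) :
    Set.EqOn (lts2SubV F I₁ G Δt M x0 x1 k) x0 S := fun _ hj =>
  (if_neg (hF.notMem_of_mem_right hj)).trans (if_neg (hI₁.notMem_of_mem_right hj))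

theorem lts2SubW_eqOn {S : Set ι} (hF : Disjoint F S) (hI₁ : Disjoint I₁ S) (k : ℕ) :
    Set.EqOn (lts2SubW F I₁ G Δt M x0 x1 k) x1 S := fun _ hj =>
  (if_neg (hF.notMem_of_mem_right hj)).trans (if_neg (hI₁.notMem_of_mem_right hj))

end Substeps

noncomputable def lts2Stage1 {ι : Type*} (F : Set ι) (G : (ι → ℝ) → ι → ℝ) (Δt : ℝ)
    (x0 : ι → ℝ) : ι → ℝ :=
  fun i => if i ∈ F then x0 i else x0 i + Δt * G x0 i

theorem lts2Step_apply {ι : Type*} (F I₁ I₂ C : Set ι) (G : (ι → ℝ) → ι → ℝ) (Δt : ℝ)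
    (M : ℕ) (x0 : ι → ℝ) (i : ι) :
    lts2Step F I₁ I₂ C G Δt M x0 i =
      if i ∈ F then (lts2Sub F I₁ G Δt M x0 (lts2Stage1 F G Δt x0) M).1 i
      else if i ∈ C then (1 / 2) * x0 i + (1 / 2) * lts2Stage1 F G Δt x0 i
        + (1 / 2) * Δt * G (lts2Stage1 F G Δt x0) i
      else x0 i + (Δt / M) * ((1 / 2) * (lts2Sub F I₁ G Δt M x0 (lts2Stage1 F G Δt x0) M).2.1 i
        + (1 / 2) * (lts2Sub F I₁ G Δt M x0 (lts2Stage1 F G Δt x0) M).2.2 i) :=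
  rfl

theorem lts2Step_eq_add_sum {ι Ed : Type*} [Fintype Ed] {F I₁ I₂ C : Set ι}
    (hF : Disjoint F (I₂ ∪ C)) (hI₁ : Disjoint I₁ (I₂ ∪ C)) {G : (ι → ℝ) → ι → ℝ}
    {Cell : Finset ι} {c₁ c₂ : Ed → ι} {A : ι → ℝ} {l : Ed → ℝ} {Fl : Ed → (ι → ℝ) → ℝ}
    (hflux : ∀ i ∈ Cell, ∀ x : ι → ℝ, G x i =
      -(1 / A i) * ((∑ e ∈ univ.filter (fun e => c₁ e = i), l e * Fl e x) -
                    (∑ e ∈ univ.filter (fun e => c₂ e = i), l e * Fl e x)))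
    (hlocal : ∀ e : Ed, (c₁ e ∈ C ∨ c₂ e ∈ C) →
      ∀ x y : ι → ℝ, (∀ j ∈ I₂ ∪ C, x j = y j) → Fl e x = Fl e y)
    (Δt : ℝ) {M : ℕ} (hM : M ≠ 0) (x0 : ι → ℝ) {i : ι} (hi : i ∈ Cell) :
    lts2Step F I₁ I₂ C G Δt M x0 i = x0 i + (Δt / (2 * M)) * ∑ j ∈ range M,
      (G (lts2SubV F I₁ G Δt M x0 (lts2Stage1 F G Δt x0) j) i +
        G (lts2SubW F I₁ G Δt M x0 (lts2Stage1 F G Δt x0) j) i) := by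
  rw [lts2Step_apply]
  set x1 := lts2Stage1 F G Δt x0
  split_ifs with hiF hiC
  · exact lts2Sub_fst_of_mem F I₁ G Δt M x0 x1 hiF M
  · have hV (j : ℕ) : G (lts2SubV F I₁ G Δt M x0 x1 j) i = G x0 i :=
      apply_eq_of_flux_form_of_eqOn hflux hlocal hi hiC (lts2SubV_eqOn G Δt M x0 x1 hF hI₁ j)
    have hW (j : ℕ) : G (lts2SubW F I₁ G Δt M x0 x1 j) i = G x1 i :=
      apply_eq_of_flux_form_of_eqOn hflux hlocal hi hiC (lts2SubW_eqOn G Δt M x0 x1 hF hI₁ j)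
    have hx1 : x1 i = x0 i + Δt * G x0 i := if_neg hiF
    rw [sum_congr rfl fun j _ => by rw [hV, hW], sum_const, card_range, nsmul_eq_mul, hx1]
    field_simp
    ring
  · rw [lts2Sub_snd_fst, lts2Sub_snd_snd, sum_add_distrib]
    ring

theorem lts2_conserves_total_mass_general {ι : Type*}
    (F I₁ I₂ C : Set ι)
    (hFI₂ : F ∩ I₂ = ∅) (hFC : F ∩ C = ∅)
    (hI₁I₂ : I₁ ∩ I₂ = ∅) (hI₁C : I₁ ∩ C = ∅)
    (G : (ι → ℝ) → ι → ℝ)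
    {Ed : Type*} [Fintype Ed] (Cell : Finset ι)
    (c₁ c₂ : Ed → ι) (hc₁ : ∀ e, c₁ e ∈ Cell) (hc₂ : ∀ e, c₂ e ∈ Cell)
    (A : ι → ℝ) (hA : ∀ i ∈ Cell, A i ≠ 0)
    (l : Ed → ℝ) (Fl : Ed → (ι → ℝ) → ℝ)
    (hflux : ∀ i ∈ Cell, ∀ x : ι → ℝ, G x i =
      -(1 / A i) * ((∑ e ∈ Finset.univ.filter (fun e => c₁ e = i), l e * Fl e x) -
                    (∑ e ∈ Finset.univ.filter (fun e => c₂ e = i), l e * Fl e x)))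
    (hlocal : ∀ e : Ed, (c₁ e ∈ C ∨ c₂ e ∈ C) →
      ∀ x y : ι → ℝ, (∀ j ∈ I₂ ∪ C, x j = y j) → Fl e x = Fl e y) :
    ∀ (Δt : ℝ) (M : ℕ), 1 ≤ M → ∀ x0 : ι → ℝ,
      ∑ i ∈ Cell, A i * lts2Step F I₁ I₂ C G Δt M x0 i = ∑ i ∈ Cell, A i * x0 i := by
  intro Δt M hM x0
  have hF : Disjoint F (I₂ ∪ C) := Set.disjoint_union_right.2
    ⟨Set.disjoint_iff_inter_eq_empty.2 hFI₂, Set.disjoint_iff_inter_eq_empty.2 hFC⟩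
  have hI₁ : Disjoint I₁ (I₂ ∪ C) := Set.disjoint_union_right.2
    ⟨Set.disjoint_iff_inter_eq_empty.2 hI₁I₂, Set.disjoint_iff_inter_eq_empty.2 hI₁C⟩
  have hmass (y : ι → ℝ) : ∑ i ∈ Cell, A i * G y i = 0 :=
    sum_mul_eq_zero_of_flux_form hc₁ hc₂ hA _ fun i hi => hflux i hi y
  set x1 := lts2Stage1 F G Δt x0
  refine sum_mul_eq_of_eq_add_sum (Δt / (2 * M)) (range M)
    (g := fun j i => G (lts2SubV F I₁ G Δt M x0 x1 j) i + G (lts2SubW F I₁ G Δt M x0 x1 j) i)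
    (fun j _ => ?_) fun i hi => lts2Step_eq_add_sum hF hI₁ hflux hlocal Δt (by omega) x0 hi
  simp only [mul_add, sum_add_distrib, hmass, add_zero]

/-- Exact mass conservation for LTS2: if the right-hand side `G` is in flux form on the
cells (TRiSK discrete divergence, with each edge having two distinct incident cells),
and every flux on an edge touching a coarse cell depends only on components in
`I₂ ∪ C`, then one LTS2 step conserves the total mass `m(x) = Σ_{i ∈ Cell} A_i·x_i`
exactly, for every coarse step `Δt`, every `M ≥ 1` and every initial state `x⁰`. -/
theorem lts2_conserves_total_mass {ι : Type*} [Fintype ι]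
    (F I₁ I₂ C : Set ι)
    (hcover : ∀ i : ι, i ∈ F ∨ i ∈ I₁ ∨ i ∈ I₂ ∨ i ∈ C)
    (hFI₁ : F ∩ I₁ = ∅) (hFI₂ : F ∩ I₂ = ∅) (hFC : F ∩ C = ∅)
    (hI₁I₂ : I₁ ∩ I₂ = ∅) (hI₁C : I₁ ∩ C = ∅) (hI₂C : I₂ ∩ C = ∅)
    (G : (ι → ℝ) → ι → ℝ)
    {Ed : Type*} [Fintype Ed] (Cell : Finset ι)
    (c₁ c₂ : Ed → ι) (hc₁ : ∀ e, c₁ e ∈ Cell) (hc₂ : ∀ e, c₂ e ∈ Cell)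
    (hcne : ∀ e, c₁ e ≠ c₂ e)
    (A : ι → ℝ) (hA : ∀ i ∈ Cell, A i ≠ 0)
    (l : Ed → ℝ) (Fl : Ed → (ι → ℝ) → ℝ)
    (hflux : ∀ i ∈ Cell, ∀ x : ι → ℝ, G x i =
      -(1 / A i) * ((∑ e ∈ Finset.univ.filter (fun e => c₁ e = i), l e * Fl e x) -
                    (∑ e ∈ Finset.univ.filter (fun e => c₂ e = i), l e * Fl e x)))
    (hlocal : ∀ e : Ed, (c₁ e ∈ C ∨ c₂ e ∈ C) →
      ∀ x y : ι → ℝ, (∀ j ∈ I₂ ∪ C, x j = y j) → Fl e x = Fl e y) :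
    ∀ (Δt : ℝ) (M : ℕ), 1 ≤ M → ∀ x0 : ι → ℝ,
      ∑ i ∈ Cell, A i * lts2Step F I₁ I₂ C G Δt M x0 i = ∑ i ∈ Cell, A i * x0 i :=
  lts2_conserves_total_mass_general F I₁ I₂ C hFI₂ hFC hI₁I₂ hI₁C G Cell c₁ c₂ hc₁ hc₂ A hA l Fl
    hflux hlocal
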